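/- For fixed p, q ∈ [0,1], the function δ ↦ d(p∗δ ‖ q∗δ), where d(a‖b) = a·ln(a/b) + (1−a)·ln((1−a)/(1−b)) is the binary KL divergence and a∗b = a(1−b) + (1−a)b is binary convolution, is convex as a function of x = (1−2δ)² for δ ∈ [0,1/2]. -/

import Mathlib

/-- Binary convolution: `a ∗ b = a(1-b) + (1-a)b`. -/
noncomputable def bconv (a b : ℝ) : ℝ := a * (1 - b) + (1 - a) * b

/-- Binary KL divergence `d(a‖b) = a ln(a/b) + (1-a) ln((1-a)/(1-b))`. -/
noncomputable def bkl (a b : ℝ) : ℝ :=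
  a * Real.log (a / b) + (1 - a) * Real.log ((1 - a) / (1 - b))

/-!
Write `u = 2p - 1`, `v = 2q - 1` and `s = √x`, so that `p ∗ δ = (1 + us)/2` and
`q ∗ δ = (1 + vs)/2`. Expanding `log (1 ± us)` and `log (1 ± vs)` turns the divergence into a
power series `∑ cⱼ xʲ⁺¹` in `x = s²`, and `cⱼ ≥ 0` is the tangent-line inequality for the convex
function `t ↦ t²ʲ⁺²` at `v`, evaluated at `u`. A series of convex functions `cⱼ xʲ⁺¹` is convex.
-/

open Real

theorem Even.one_add_mul_le_pow {R : Type*} [CommRing R] [LinearOrder R]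
    [IsStrictOrderedRing R] {n : ℕ} (hn : Even n) (t : R) : 1 + n * t ≤ (1 + t) ^ n := by
  rcases le_or_gt (-2) t with ht | ht
  · exact _root_.one_add_mul_le_pow ht n
  rcases n.eq_zero_or_pos with rfl | hpos
  · simp
  have hn1 : (1 : R) ≤ n := by exact_mod_cast hpos
  nlinarith [hn.pow_nonneg (1 + t), mul_le_mul_of_nonneg_left ht.le (Nat.cast_nonneg' n)]

theorem Even.pow_add_mul_sub_le_pow {K : Type*} [Field K] [LinearOrder K]
    [IsStrictOrderedRing K] {n : ℕ} (hn : Even n) (a b : K) :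
    b ^ n + n * b ^ (n - 1) * (a - b) ≤ a ^ n := by
  obtain rfl | ⟨m, rfl⟩ : n = 0 ∨ ∃ m, n = m + 1 := by cases n <;> simp
  · simp
  rcases eq_or_ne b 0 with rfl | hb
  · have hm : m ≠ 0 := by rintro rfl; simp at hn
    simpa [hm] using hn.pow_nonneg a
  have hbern := mul_le_mul_of_nonneg_left (hn.one_add_mul_le_pow (a / b - 1))
    (hn.pow_nonneg b)
  calc b ^ (m + 1) + ↑(m + 1) * b ^ (m + 1 - 1) * (a - b)
      = b ^ (m + 1) * (1 + ↑(m + 1) * (a / b - 1)) := by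
        simp only [add_tsub_cancel_right]; field_simp; ring
    _ ≤ b ^ (m + 1) * (1 + (a / b - 1)) ^ (m + 1) := hbern
    _ = a ^ (m + 1) := by rw [add_sub_cancel, div_pow, mul_div_cancel₀ _ (pow_ne_zero _ hb)]

theorem ConvexOn.of_hasSum {ι E : Type*} [AddCommMonoid E] [Module ℝ E] {s : Set E}
    {g : ι → E → ℝ} {f : E → ℝ} (hs : Convex ℝ s) (hg : ∀ i, ConvexOn ℝ s (g i))
    (hf : ∀ x ∈ s, HasSum (fun i => g i x) (f x)) : ConvexOn ℝ s f := by
  refine ⟨hs, fun x hx y hy α β hα hβ hαβ => ?_⟩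
  exact hasSum_le (fun i => (hg i).2 hx hy hα hβ hαβ) (hf _ (hs hx hy hα hβ hαβ))
    (((hf x hx).const_smul α).add ((hf y hy).const_smul β))

noncomputable def bklCoeff (u v : ℝ) (j : ℕ) : ℝ :=
  u * (u ^ (2 * j + 1) - v ^ (2 * j + 1)) / (2 * j + 1)
    - (u ^ (2 * j + 2) - v ^ (2 * j + 2)) / (2 * j + 2)

theorem bklCoeff_nonneg (u v : ℝ) (j : ℕ) : 0 ≤ bklCoeff u v j := by
  have htan := (show Even (2 * j + 2) from ⟨j + 1, by ring⟩).pow_add_mul_sub_le_pow u v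
  push_cast at htan
  rw [pow_succ u, pow_succ v] at htan
  rw [bklCoeff, sub_nonneg, div_le_div_iff₀ (by positivity) (by positivity), pow_succ u,
    pow_succ v]
  linarith

theorem bklCoeff_mul_mul (u v s : ℝ) (j : ℕ) :
    bklCoeff (u * s) (v * s) j = bklCoeff u v j * s ^ (2 * j + 2) := by
  simp only [bklCoeff, mul_pow]
  ring

theorem bconv_one_sub_div_two (p s : ℝ) :
    bconv p ((1 - s) / 2) = (1 + (2 * p - 1) * s) / 2 := by
  rw [bconv]; ring

theorem bkl_one_add_div_two {u v : ℝ} (hu : |u| < 1) (hv : |v| < 1) :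
    bkl ((1 + u) / 2) ((1 + v) / 2) =
      u / 2 * ((log (1 + u) - log (1 - u)) - (log (1 + v) - log (1 - v)))
        - (-log (1 - u ^ 2) - -log (1 - v ^ 2)) / 2 := by
  obtain ⟨hu₁, hu₂⟩ := abs_lt.mp hu
  obtain ⟨hv₁, hv₂⟩ := abs_lt.mp hv
  have h1u : 1 - u ^ 2 = (1 - u) * (1 + u) := by ring
  have h1v : 1 - v ^ 2 = (1 - v) * (1 + v) := by ring
  have h2u : 1 - (1 + u) / 2 = (1 - u) / 2 := by ring
  have h2v : 1 - (1 + v) / 2 = (1 - v) / 2 := by ring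
  rw [bkl, h1u, h1v, h2u, h2v, div_div_div_cancel_right₀ two_ne_zero,
    div_div_div_cancel_right₀ two_ne_zero, log_div, log_div, log_mul, log_mul]
  · ring
  all_goals linarith

theorem hasSum_bklCoeff {u v : ℝ} (hu : |u| < 1) (hv : |v| < 1) :
    HasSum (bklCoeff u v) (bkl ((1 + u) / 2) ((1 + v) / 2)) := by
  have hu2 : |u ^ 2| < 1 := by rw [abs_pow]; exact pow_lt_one₀ (abs_nonneg u) hu two_ne_zero
  have hv2 : |v ^ 2| < 1 := by rw [abs_pow]; exact pow_lt_one₀ (abs_nonneg v) hv two_ne_zero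
  rw [bkl_one_add_div_two hu hv]
  have hodd := (hasSum_log_sub_log_of_abs_lt_one hu).sub (hasSum_log_sub_log_of_abs_lt_one hv)
  have heven := (hasSum_pow_div_log_of_abs_lt_one hu2).sub (hasSum_pow_div_log_of_abs_lt_one hv2)
  refine ((hodd.mul_left (u / 2)).sub (heven.div_const 2)).congr_fun fun j => ?_
  simp only [bklCoeff, ← pow_mul]
  field_simp
  ring

theorem binary_kl_convex_in_chi_sq_param (p q : ℝ)
    (hp : p ∈ Set.Ioo (0:ℝ) 1) (hq : q ∈ Set.Ioo (0:ℝ) 1) :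
    ConvexOn ℝ (Set.Ioc (0:ℝ) 1)
      (fun x => bkl (bconv p ((1 - Real.sqrt x) / 2)) (bconv q ((1 - Real.sqrt x) / 2))) := by
  have hbias {r : ℝ} (hr : r ∈ Set.Ioo (0:ℝ) 1) {x : ℝ} (hx : x ∈ Set.Ioc (0:ℝ) 1) :
      |(2 * r - 1) * √x| < 1 := by
    rw [abs_mul, abs_of_nonneg (sqrt_nonneg x)]
    refine mul_lt_one_of_nonneg_of_lt_one_left (abs_nonneg _) (abs_sub_lt_iff.mpr ⟨?_, ?_⟩)
      (sqrt_le_one.mpr hx.2)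
    all_goals linarith [hr.1, hr.2]
  have hterm (j : ℕ) : ConvexOn ℝ (Set.Ioc (0:ℝ) 1)
      fun x => bklCoeff (2 * p - 1) (2 * q - 1) j * x ^ (j + 1) :=
    ((convexOn_pow (j + 1)).subset (Set.Ioc_subset_Ioi_self.trans Set.Ioi_subset_Ici_self)
      (convex_Ioc 0 1)).smul (bklCoeff_nonneg _ _ j)
  refine ConvexOn.of_hasSum (convex_Ioc 0 1) hterm fun x hx => ?_
  have hsum := hasSum_bklCoeff (hbias hp hx) (hbias hq hx)
  rw [← bconv_one_sub_div_two, ← bconv_one_sub_div_two] at hsum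
  convert hsum using 1
  funext j
  rw [bklCoeff_mul_mul, show 2 * j + 2 = 2 * (j + 1) by ring, pow_mul, sq_sqrt hx.1.le]
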